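/- arXiv:0906.2994 — 2 statements merged into one kernel-verified Lean document; each statement's English description precedes it below -/
import Mathlib

section
/- Let O be a discrete valuation ring with residue field F and let C be a bounded complex of finitely generated free O-modules. If for every odd integer i the cohomology H^i(F ⊗_O C) of the reduced complex vanishes, then for every integer i the O-module H^i(C) is free, and H^i(C) = 0 for all odd i. -/
/-!
Choose a uniformizer `ϖ` of `O`. Since the terms of `C` are free, multiplication by `ϖ` gives a
short exact sequence of complexes `0 → C → C → F ⊗ C → 0`. In its long exact cohomology sequence,
`H^i(F ⊗ C) = 0` makes `ϖ` surjective on `H^i(C)` and injective on `H^{i+1}(C)`. For odd `i`,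
Nakayama's lemma applied to the finitely generated module `H^i(C) = ϖ H^i(C)` gives `H^i(C) = 0`;
for even `i`, `H^i(C)` has no `ϖ`-torsion, hence is torsion-free and so free over the PID `O`.
-/

open CategoryTheory CategoryTheory.Limits CategoryTheory.MonoidalCategory
open scoped Pointwise

universe u

section Modules

variable {R : Type u} {M : Type*} [CommRing R] [AddCommGroup M] [Module R M]

lemma TensorProduct.exact_smul_mk_one {I : Ideal R} {x : R} (hI : I = Ideal.span {x}) :
    Function.Exact (x • LinearMap.id : M →ₗ[R] M) (TensorProduct.mk R (R ⧸ I) M 1) := by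
  rw [LinearMap.exact_iff, ← quotTensorEquivQuotSMul_symm_comp_mkQ, LinearEquiv.ker_comp,
    Submodule.ker_mkQ, hI, Submodule.ideal_span_singleton_smul]
  ext m
  simp [Submodule.mem_smul_pointwise_iff_exists, eq_comm]

lemma subsingleton_of_smul_surjective [Module.Finite R M] {x : R}
    (hx : x ∈ (⊥ : Ideal R).jacobson) (hsurj : Function.Surjective (x • · : M → M)) :
    Subsingleton M := by
  by_contra hM
  rw [not_subsingleton_iff_nontrivial] at hM
  refine Submodule.top_ne_pointwise_smul_of_mem_jacobson_annihilator (M := M)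
    (Ideal.jacobson_mono bot_le hx) (le_antisymm ?_ le_top)
  rintro m -
  obtain ⟨y, rfl⟩ := hsurj m
  exact Submodule.smul_mem_pointwise_smul y x ⊤ Submodule.mem_top

lemma IsDiscreteValuationRing.isTorsionFree_of_isSMulRegular [IsDomain R]
    [IsDiscreteValuationRing R] {ϖ : R} (hϖ : Irreducible ϖ) (hreg : IsSMulRegular M ϖ) :
    Module.IsTorsionFree R M where
  isSMulRegular r hr := by
    obtain ⟨n, u, rfl⟩ := IsDiscreteValuationRing.eq_unit_mul_pow_irreducible hr.ne_zero hϖ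
    exact (u.isUnit.isSMulRegular M).mul (hreg.pow n)

end Modules

namespace HomologicalComplex

variable {ι : Type*} {c : ComplexShape ι}

lemma homologyMap_smul {R : Type*} [Semiring R] {C : Type*} [Category C] [Abelian C]
    [Linear R C] {K L : HomologicalComplex C c} (φ : K ⟶ L) (r : R) (i : ι) :
    homologyMap (r • φ) i = r • homologyMap φ i := by
  have h : (shortComplexFunctor C c i).map (r • φ) = r • (shortComplexFunctor C c i).map φ := by
    ext <;> rfl
  dsimp only [homologyMap]
  rw [h, ShortComplex.homologyMap_smul]
  rfl

variable {R : Type u} [CommRing R]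

lemma coe_homologyMap_smul_id (K : HomologicalComplex (ModuleCat R) c) (r : R) (i : ι) :
    ⇑(homologyMap (r • 𝟙 K) i) = (r • · : K.homology i → K.homology i) := by
  rw [homologyMap_smul, homologyMap_id]
  rfl

lemma _root_.Module.Finite.homology [IsNoetherianRing R] (K : HomologicalComplex (ModuleCat R) c)
    (i : ι) [Module.Finite R (K.X i)] : Module.Finite R (K.homology i) :=
  have : IsNoetherian R (K.cycles i) := isNoetherian_of_injective (K.iCycles i).hom
    ((ModuleCat.mono_iff_injective _).mp inferInstance)
  Module.Finite.of_surjective (K.homologyπ i).hom ((ModuleCat.epi_iff_surjective _).mp inferInstance)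

section SMulSequence

variable {K L : HomologicalComplex (ModuleCat R) c} {r : R} {g : K ⟶ L} {w : (r • 𝟙 K) ≫ g = 0}

lemma smul_surjective_homology_of_isZero (hS : (ShortComplex.mk _ g w).ShortExact) {i : ι}
    (hL : IsZero (L.homology i)) : Function.Surjective (r • · : K.homology i → K.homology i) := by
  have := (hS.homology_exact₂ i).epi_f (hL.eq_of_tgt _ _)
  rw [← coe_homologyMap_smul_id]
  exact (ModuleCat.epi_iff_surjective _).mp this

lemma isSMulRegular_homology_of_isZero (hS : (ShortComplex.mk _ g w).ShortExact) {i j : ι}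
    (hij : c.Rel i j) (hL : IsZero (L.homology i)) : IsSMulRegular (K.homology j) r := by
  have := (hS.homology_exact₁ i j hij).mono_g (hL.eq_of_src _ _)
  rw [IsSMulRegular, ← coe_homologyMap_smul_id]
  exact (ModuleCat.mono_iff_injective _).mp this

end SMulSequence

noncomputable def toTensorLeft (A : Type u) [Ring A] [Algebra R A]
    (K : HomologicalComplex (ModuleCat R) c) :
    K ⟶ ((tensorLeft (ModuleCat.of R A)).mapHomologicalComplex c).obj K where
  f i := ModuleCat.ofHom (TensorProduct.mk R A (K.X i) 1)
  comm' i j _ := by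
    ext m
    exact (LinearMap.lTensor_tmul A (K.d i j).hom 1 m).symm

section Reduction

variable {I : Ideal R} {x : R} (hI : I = Ideal.span {x}) (K : HomologicalComplex (ModuleCat R) c)
include hI

lemma smul_id_comp_toTensorLeft : (x • 𝟙 K) ≫ toTensorLeft (R ⧸ I) K = 0 := by
  ext i m
  exact (TensorProduct.exact_smul_mk_one hI).apply_apply_eq_zero m

lemma shortExact_smul_toTensorLeft (hreg : ∀ i, IsSMulRegular (K.X i) x) :
    (ShortComplex.mk _ _ (smul_id_comp_toTensorLeft hI K)).ShortExact :=
  shortExact_of_degreewise_shortExact _ fun i ↦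
    ModuleCat.shortComplex_shortExact _ (TensorProduct.exact_smul_mk_one hI) (hreg i)
      (TensorProduct.mk_surjective R (K.X i) (R ⧸ I) Ideal.Quotient.mk_surjective)

end Reduction

end HomologicalComplex

theorem homology_free_and_odd_vanishing_of_reduction_odd_vanishing_general
    (O : Type) [CommRing O] [IsDomain O] [IsDiscreteValuationRing O]
    (C : CochainComplex (ModuleCat O) ℤ)
    (hfree : ∀ i : ℤ, Module.Free O (C.X i))
    (hfin : ∀ i : ℤ, Module.Finite O (C.X i))
    (hodd : ∀ i : ℤ, Odd i →
      IsZero ((((tensorLeft (ModuleCat.of O (IsLocalRing.ResidueField O))).mapHomologicalComplex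
        (ComplexShape.up ℤ)).obj C).homology i)) :
    (∀ i : ℤ, Module.Free O (C.homology i)) ∧ ∀ i : ℤ, Odd i → IsZero (C.homology i) := by
  obtain ⟨ϖ, hϖ⟩ := IsDiscreteValuationRing.exists_irreducible O
  -- `ResidueField O` is by definition `O ⧸ maximalIdeal O`, so `hodd` speaks about `hS.X₃`.
  have hS := C.shortExact_smul_toTensorLeft hϖ.maximalIdeal_eq fun i ↦
    (IsRegular.of_ne_zero hϖ.ne_zero).isSMulRegular (M := C.X i)
  have hϖ_jacobson : ϖ ∈ (⊥ : Ideal O).jacobson := by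
    rw [IsLocalRing.jacobson_eq_maximalIdeal ⊥ bot_ne_top]
    exact hϖ.not_isUnit
  have hfinite (i : ℤ) : Module.Finite O (C.homology i) := Module.Finite.homology C i
  have hodd_subsingleton (i : ℤ) (hi : Odd i) : Subsingleton (C.homology i) :=
    subsingleton_of_smul_surjective hϖ_jacobson
      (HomologicalComplex.smul_surjective_homology_of_isZero hS (hodd i hi))
  refine ⟨fun i ↦ ?_, fun i hi ↦
    have := hodd_subsingleton i hi
    ModuleCat.isZero_of_subsingleton _⟩
  rcases Int.even_or_odd i with hi | hi
  · have := IsDiscreteValuationRing.isTorsionFree_of_isSMulRegular hϖ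
      (HomologicalComplex.isSMulRegular_homology_of_isZero hS (sub_add_cancel i 1)
        (hodd (i - 1) (hi.sub_odd odd_one)))
    exact Module.free_of_finite_type_torsion_free'
  · have := hodd_subsingleton i hi
    infer_instance

/-- Let `O` be a discrete valuation ring with residue field `F` and `C` a bounded complex of
finitely generated free `O`-modules.  If the cohomology `H^i(F ⊗_O C)` of the termwise
reduction vanishes for every odd `i`, then every `H^i(C)` is a free `O`-module and
`H^i(C) = 0` for all odd `i`. -/
theorem homology_free_and_odd_vanishing_of_reduction_odd_vanishing
    (O : Type) [CommRing O] [IsDomain O] [IsDiscreteValuationRing O]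
    (C : CochainComplex (ModuleCat O) ℤ)
    (hbdd : ∃ a b : ℤ, ∀ i : ℤ, (i < a ∨ b < i) → IsZero (C.X i))
    (hfree : ∀ i : ℤ, Module.Free O (C.X i))
    (hfin : ∀ i : ℤ, Module.Finite O (C.X i))
    (hodd : ∀ i : ℤ, Odd i →
      IsZero ((((tensorLeft (ModuleCat.of O (IsLocalRing.ResidueField O))).mapHomologicalComplex
        (ComplexShape.up ℤ)).obj C).homology i)) :
    (∀ i : ℤ, Module.Free O (C.homology i)) ∧ ∀ i : ℤ, Odd i → IsZero (C.homology i) :=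
  homology_free_and_odd_vanishing_of_reduction_odd_vanishing_general O C hfree hfin hodd
end

section
/- Let k be a field and C a k-linear Krull–Schmidt additive category. Let a, b be objects with End(a) ≅ k, and write b ≅ a^{⊕m} ⊕ c where a is not a direct summand of c. Then m equals the rank of the composition pairing B : Hom(a,b) × Hom(b,a) → End(a) = k. Moreover Hom(a,c) = ⊥B inside Hom(a,b) and Hom(c,a) = B⊥ inside Hom(b,a). -/
/-!
Splitting `𝟙 b` along `b ≅ a^m ⊞ c` into the projections `πᵢ`, inclusions `ιᵢ` and the part
through `c` gives `B(f, g) = ∑ᵢ B(f, πᵢ) B(ιᵢ, g)`: every composite `a ⟶ c ⟶ a` vanishes, because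
a nonzero endomorphism of `a` is a unit of `End a ≅ k`, which would make `a` a retract of `c`.
Since `B(ιᵢ, πⱼ) = δᵢⱼ`, the functionals `B(ιᵢ, -)` form a basis of the range of `B`, and both
kernels are read off from the same formula.
-/

open CategoryTheory CategoryTheory.Limits

section Biorthogonal

variable {k M N ι : Type*} [Field k] [AddCommGroup M] [Module k M] [AddCommGroup N] [Module k N]
  [Fintype ι] (B : M →ₗ[k] N →ₗ[k] k) {x : ι → M} {y : ι → N}

theorem LinearMap.eq_zero_iff_of_eq_sum_mul
    (hsum : ∀ m n, B m n = ∑ i, B m (y i) * B (x i) n) (m : M) :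
    B m = 0 ↔ ∀ i, B m (y i) = 0 := by
  refine ⟨fun h i => by rw [h, LinearMap.zero_apply], fun h => ?_⟩
  ext n
  simp [hsum m n, h]

theorem LinearMap.flip_eq_zero_iff_of_eq_sum_mul
    (hsum : ∀ m n, B m n = ∑ i, B m (y i) * B (x i) n) (n : N) :
    (∀ m, B m n = 0) ↔ ∀ i, B (x i) n = 0 :=
  ⟨fun h i => h (x i), fun h m => by simp [hsum m n, h]⟩

theorem LinearMap.finrank_range_eq_card_of_biorthogonal [DecidableEq ι]
    (hxy : ∀ i j, B (x i) (y j) = if i = j then 1 else 0)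
    (hsum : ∀ m n, B m n = ∑ i, B m (y i) * B (x i) n) :
    Module.finrank k (LinearMap.range B) = Fintype.card ι := by
  have hli : LinearIndependent k (B ∘ x) := by
    rw [Fintype.linearIndependent_iff]
    intro t ht i
    simpa [hxy] using congrArg (fun φ => φ (y i)) ht
  have hspan : LinearMap.range B = Submodule.span k (Set.range (B ∘ x)) := by
    refine le_antisymm ?_ (Submodule.span_le.mpr (Set.range_subset_iff.mpr fun i => ⟨x i, rfl⟩))
    rintro _ ⟨m, rfl⟩
    have hm : B m = ∑ i, B m (y i) • (B ∘ x) i := by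
      ext n
      simp [hsum m n]
    rw [hm]
    exact Submodule.sum_mem _ fun i _ => Submodule.smul_mem _ _ (Submodule.subset_span ⟨i, rfl⟩)
  rw [hspan, finrank_span_eq_card hli]

end Biorthogonal

namespace CategoryTheory

section Summands

variable {C : Type*} [Category C] [Preadditive C] {ι : Type} {f : ι → C}
  [HasBiproduct f] {b c : C} [HasBinaryBiproduct (⨁ f) c] (e : b ≅ (⨁ f) ⊞ c)

noncomputable def Iso.summandι (i : ι) : f i ⟶ b := biproduct.ι f i ≫ biprod.inl ≫ e.inv

noncomputable def Iso.summandπ (i : ι) : b ⟶ f i := e.hom ≫ biprod.fst ≫ biproduct.π f i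

@[simp]
theorem Iso.summandι_comp_summandπ_self (i : ι) : e.summandι i ≫ e.summandπ i = 𝟙 (f i) := by
  simp [Iso.summandι, Iso.summandπ]

theorem Iso.summandι_comp_summandπ_of_ne [DecidableEq ι] {i j : ι} (h : i ≠ j) :
    e.summandι i ≫ e.summandπ j = 0 := by
  simp [Iso.summandι, Iso.summandπ, biproduct.ι_π_ne _ h]

theorem Iso.sum_summandπ_comp_summandι_add [Fintype ι] :
    ∑ i, e.summandπ i ≫ e.summandι i + (e.hom ≫ biprod.snd) ≫ biprod.inr ≫ e.inv = 𝟙 b := by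
  have h : biprod.fst ≫ (∑ i, biproduct.π f i ≫ biproduct.ι f i) ≫ biprod.inl +
      biprod.snd ≫ biprod.inr = 𝟙 ((⨁ f) ⊞ c) := by
    rw [biproduct.total, Category.id_comp, biprod.total]
  have := e.hom ≫= h =≫ e.inv
  simp only [Preadditive.sum_comp, Preadditive.comp_sum, Preadditive.add_comp,
    Preadditive.comp_add, Category.assoc, Category.id_comp, Iso.hom_inv_id] at this
  simpa [Iso.summandι, Iso.summandπ] using this

theorem Iso.comp_eq_sum_add [Fintype ι] {X Y : C} (φ : X ⟶ b) (χ : b ⟶ Y) :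
    φ ≫ χ = ∑ i, (φ ≫ e.summandπ i) ≫ (e.summandι i ≫ χ) +
      (φ ≫ e.hom ≫ biprod.snd) ≫ (biprod.inr ≫ e.inv ≫ χ) := by
  conv_lhs => rw [← Category.id_comp χ, ← e.sum_summandπ_comp_summandι_add]
  simp only [Preadditive.add_comp, Preadditive.sum_comp, Preadditive.comp_add,
    Preadditive.comp_sum, Category.assoc]

theorem Iso.forall_comp_summandπ_eq_zero_iff [Fintype ι] {X : C} (φ : X ⟶ b) :
    (∀ i, φ ≫ e.summandπ i = 0) ↔ ∃ h : X ⟶ c, φ = h ≫ biprod.inr ≫ e.inv := by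
  constructor
  · intro hφ
    refine ⟨φ ≫ e.hom ≫ biprod.snd, ?_⟩
    simpa [hφ] using e.comp_eq_sum_add φ (𝟙 b)
  · rintro ⟨h, rfl⟩ i
    simp [Iso.summandπ]

theorem Iso.forall_summandι_comp_eq_zero_iff [Fintype ι] {X : C} (χ : b ⟶ X) :
    (∀ i, e.summandι i ≫ χ = 0) ↔ ∃ h : c ⟶ X, χ = e.hom ≫ biprod.snd ≫ h := by
  constructor
  · intro hχ
    refine ⟨biprod.inr ≫ e.inv ≫ χ, ?_⟩
    simpa [hχ] using e.comp_eq_sum_add (𝟙 b) χ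
  · rintro ⟨h, rfl⟩ i
    simp [Iso.summandι]

end Summands

theorem comp_eq_zero_of_not_retract {C : Type*} [Category C] [HasZeroMorphisms C] {a c : C}
    (hdiv : ∀ u : a ⟶ a, u ≠ 0 → IsIso u) (hnot : ¬ ∃ (f : a ⟶ c) (g : c ⟶ a), f ≫ g = 𝟙 a)
    (p : a ⟶ c) (q : c ⟶ a) : p ≫ q = 0 := by
  by_contra hpq
  have := hdiv _ hpq
  exact hnot ⟨p, q ≫ inv (p ≫ q), by rw [← Category.assoc, IsIso.hom_inv_id]⟩

section ScalarEndomorphisms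

variable {k : Type*} [Field k] {C : Type*} [Category C] [Preadditive C] [Linear k C] {a : C}

theorem isIso_of_ne_zero_of_bijective_toSpanSingleton
    (hEnd : Function.Bijective (LinearMap.toSpanSingleton k (a ⟶ a) (𝟙 a))) (u : a ⟶ a)
    (hu : u ≠ 0) : IsIso u := by
  obtain ⟨t, rfl⟩ := hEnd.2 u
  have ht : t ≠ 0 := by rintro rfl; simp at hu
  refine ⟨t⁻¹ • 𝟙 a, ?_, ?_⟩ <;> simp [smul_smul, ht]

theorem ofBijective_toSpanSingleton_symm_comp
    (hEnd : Function.Bijective (LinearMap.toSpanSingleton k (a ⟶ a) (𝟙 a))) (u v : a ⟶ a) :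
    (LinearEquiv.ofBijective _ hEnd).symm (u ≫ v) =
      (LinearEquiv.ofBijective _ hEnd).symm u * (LinearEquiv.ofBijective _ hEnd).symm v := by
  set ψ := LinearEquiv.ofBijective _ hEnd
  obtain ⟨s, rfl⟩ := ψ.surjective u
  obtain ⟨t, rfl⟩ := ψ.surjective v
  have hst : ψ s ≫ ψ t = ψ (s * t) := by
    simp [ψ, mul_comm s t, mul_smul]
  rw [hst, ψ.symm_apply_apply, ψ.symm_apply_apply, ψ.symm_apply_apply]

end ScalarEndomorphisms

end CategoryTheory

/-- Let `C` be a `k`-linear Krull–Schmidt additive category (`k` a field), `a`, `c` objects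
with `End(a) ≅ k` (via `t ↦ t • 𝟙 a`), and `b ≅ a^{⊕m} ⊕ c` where `a` is not a direct
summand of `c`.  Then `m` equals the rank of the composition pairing
`B : Hom(a,b) × Hom(b,a) → End(a) = k`, i.e. the rank of the induced map
`Hom(a,b) → Hom(b,a)^*`; moreover `Hom(a,c) = ⊥B` inside `Hom(a,b)` and
`Hom(c,a) = B⊥` inside `Hom(b,a)` (via the given decomposition of `b`). -/
theorem multiplicity_eq_rank_of_composition_pairing
    {k : Type} [Field k] {C : Type} [Category C] [Preadditive C]
    [CategoryTheory.Linear k C] [HasFiniteBiproducts C] [HasBinaryBiproducts C]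
    (a c b : C) (m : ℕ)
    (e : b ≅ (⨁ fun _ : Fin m => a) ⊞ c)
    (hEnd : Function.Bijective (LinearMap.toSpanSingleton k (a ⟶ a) (𝟙 a)))
    (hnot : ¬ ∃ (f : a ⟶ c) (g : c ⟶ a), f ≫ g = 𝟙 a) :
    let ψ : k ≃ₗ[k] (a ⟶ a) := LinearEquiv.ofBijective _ hEnd
    let Bpair : (a ⟶ b) →ₗ[k] (b ⟶ a) →ₗ[k] k :=
      LinearMap.mk₂ k (fun f g => ψ.symm (f ≫ g))
        (by intros; simp [Preadditive.add_comp])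
        (by intros; simp [CategoryTheory.Linear.smul_comp])
        (by intros; simp [Preadditive.comp_add])
        (by intros; simp [CategoryTheory.Linear.comp_smul])
    m = Module.finrank k ↥(LinearMap.range Bpair) ∧
    (∀ f : a ⟶ b, f ∈ LinearMap.ker Bpair ↔
      ∃ h : a ⟶ c, f = h ≫ biprod.inr ≫ e.inv) ∧
    (∀ g : b ⟶ a, (∀ f : a ⟶ b, Bpair f g = 0) ↔
      ∃ h : c ⟶ a, g = e.hom ≫ biprod.snd ≫ h) := by
  intro ψ Bpair
  have hB : ∀ f g, Bpair f g = ψ.symm (f ≫ g) := fun _ _ => rfl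
  have hψ_eq_zero : ∀ u : a ⟶ a, ψ.symm u = 0 ↔ u = 0 := fun u => ψ.symm.map_eq_zero_iff
  have hxy : ∀ i j, Bpair (e.summandι i) (e.summandπ j) = if i = j then 1 else 0 := by
    intro i j
    split_ifs with hij
    · subst hij
      rw [hB, e.summandι_comp_summandπ_self, ← one_smul k (𝟙 a)]
      exact ψ.symm_apply_apply 1
    · rw [hB, e.summandι_comp_summandπ_of_ne hij, map_zero]
  have hsum : ∀ f g, Bpair f g = ∑ i, Bpair f (e.summandπ i) * Bpair (e.summandι i) g := by
    intro f g
    rw [hB, e.comp_eq_sum_add f g, comp_eq_zero_of_not_retract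
      (isIso_of_ne_zero_of_bijective_toSpanSingleton hEnd) hnot, add_zero, map_sum]
    exact Finset.sum_congr rfl fun i _ => ofBijective_toSpanSingleton_symm_comp hEnd _ _
  refine ⟨?_, fun f => ?_, fun g => ?_⟩
  · rw [LinearMap.finrank_range_eq_card_of_biorthogonal Bpair hxy hsum, Fintype.card_fin]
  · rw [LinearMap.mem_ker, LinearMap.eq_zero_iff_of_eq_sum_mul Bpair hsum,
      ← e.forall_comp_summandπ_eq_zero_iff]
    simp only [hB, hψ_eq_zero]
  · rw [LinearMap.flip_eq_zero_iff_of_eq_sum_mul Bpair hsum, ← e.forall_summandι_comp_eq_zero_iff]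
    simp only [hB, hψ_eq_zero]
end
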